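/- (Well-definedness of the logarithmic Schrödinger operator.) Let N ≥ 1 and let u ∈ L₀(ℝ^N) ∩ L^∞(ℝ^N) be Dini continuous at a point x ∈ ℝ^N. Then the principal value lim_{ε→0⁺} ∫_{{y : |x−y|>ε}} (u(x)−u(y)) κ(|x−y|) |x−y|^{−N} dy exists and is finite; in particular ((I−Δ)^log u)(x) is well defined. -/

import Mathlib

/-!
The integrand `(u(x) − u(y)) κ(|x−y|) |x−y|^{−N}` is absolutely integrable on all of `ℝ^N`, so
the truncated integrals converge to its integral by dominated convergence. Integrability comes from
`κ(r) ≤ 2^{N/2} Γ(N/2) e^{−r/2}` and `|u(x) − u(y)| ≤ Ψ(|x−y|) ≤ 2 sup |u|`: in polar coordinates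
the integrand is dominated by `Ψ(r) e^{−r/2} / r`, which is integrable near `0` by Dini continuity
and near `∞` by the exponential decay.
-/

open MeasureTheory Filter Set

/-- The kernel `κ(r) = ∫₀^∞ t^{N/2−1} e^{−t − r²/(4t)} dt` of the logarithmic
Schrödinger operator on `ℝ^N`. -/
noncomputable def kappa (N : ℕ) (r : ℝ) : ℝ :=
  ∫ t in Set.Ioi (0 : ℝ), t ^ ((N : ℝ) / 2 - 1) * Real.exp (-t - r ^ 2 / (4 * t))

/-- The logarithmic Schrödinger operator `(I − Δ)^log`, defined as the principal-value
singular integral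
`π^{−N/2} lim_{ε→0⁺} ∫_{|x−y|>ε} (u(x)−u(y)) κ(|x−y|) |x−y|^{−N} dy`. -/
noncomputable def logSchrodingerOp (N : ℕ) (u : EuclideanSpace ℝ (Fin N) → ℝ)
    (x : EuclideanSpace ℝ (Fin N)) : ℝ :=
  Real.pi ^ (-(N : ℝ) / 2) *
    limUnder (nhdsWithin 0 (Set.Ioi (0 : ℝ))) fun ε : ℝ =>
      ∫ y in {y : EuclideanSpace ℝ (Fin N) | ε < dist x y},
        (u x - u y) * kappa N (dist x y) / dist x y ^ N

/-- `u ∈ L₀(ℝ^N)`: `u` is locally integrable and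
`∫ |u(x)| e^{−|x|} (1+|x|)^{−(N+1)/2} dx < ∞`. -/
def MemL0 {N : ℕ} (u : EuclideanSpace ℝ (Fin N) → ℝ) : Prop :=
  MeasureTheory.LocallyIntegrable u MeasureTheory.volume ∧
    MeasureTheory.Integrable
      (fun x => |u x| * Real.exp (-‖x‖) / (1 + ‖x‖) ^ (((N : ℝ) + 1) / 2))
      MeasureTheory.volume

/-- The modulus of continuity `Ψ_{u,x}(r) = sup_{|y−x|≤r} |u(x)−u(y)|`. -/
noncomputable def modulusOfContinuity {N : ℕ} (u : EuclideanSpace ℝ (Fin N) → ℝ)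
    (x : EuclideanSpace ℝ (Fin N)) (r : ℝ) : ℝ :=
  sSup {d : ℝ | ∃ y, dist x y ≤ r ∧ d = |u x - u y|}

/-- `u` is Dini continuous at `x`: `∫₀¹ Ψ_{u,x}(r)/r dr < ∞`. -/
def DiniContinuousAt {N : ℕ} (u : EuclideanSpace ℝ (Fin N) → ℝ)
    (x : EuclideanSpace ℝ (Fin N)) : Prop :=
  MeasureTheory.IntegrableOn (fun r => modulusOfContinuity u x r / r) (Set.Ioc 0 1)

/-- The reflection `x^λ = (2λ−x₁, x₂, …, x_N)` across the hyperplane `{x₁ = λ}`. -/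
noncomputable def reflect {N : ℕ} [NeZero N] (lam : ℝ)
    (x : EuclideanSpace ℝ (Fin N)) : EuclideanSpace ℝ (Fin N) :=
  WithLp.toLp 2 (Function.update x.ofLp 0 (2 * lam - x 0))

/-- The half space `Σ_λ = {x ∈ ℝ^N : x₁ < λ}`. -/
def halfSpace (N : ℕ) [NeZero N] (lam : ℝ) : Set (EuclideanSpace ℝ (Fin N)) :=
  {x | x 0 < lam}


open Topology Real

lemma kappa_nonneg (N : ℕ) (r : ℝ) : 0 ≤ kappa N r :=
  setIntegral_nonneg measurableSet_Ioi fun t (_ : 0 < t) => by positivity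

lemma measurable_kappa (N : ℕ) : Measurable (kappa N) := by
  have : Measurable fun p : ℝ × ℝ =>
      p.2 ^ ((N : ℝ) / 2 - 1) * exp (-p.2 - p.1 ^ 2 / (4 * p.2)) := by fun_prop
  exact (this.stronglyMeasurable.integral_prod_right' (ν := volume.restrict (Ioi 0))).measurable

/-- Since `t/2 + r²/(4t) ≥ r/2` by AM-GM, the exponent `-t - r²/(4t)` is at most `-t/2 - r/2`. -/
lemma kappa_le_mul_exp_neg_half {N : ℕ} (hN : N ≠ 0) (r : ℝ) :
    kappa N r ≤ 2 ^ ((N : ℝ) / 2) * Gamma (N / 2) * exp (-(r / 2)) := by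
  have hs : 0 < (N : ℝ) / 2 := by positivity
  have hdom : IntegrableOn (fun t : ℝ => t ^ ((N : ℝ) / 2 - 1) * exp (-(1 / 2 * t))) (Ioi 0) := by
    simpa [rpow_one] using integrableOn_rpow_mul_exp_neg_mul_rpow (p := 1) (b := 1 / 2)
      (by linarith) one_pos (by norm_num)
  calc kappa N r
      ≤ ∫ t in Ioi 0, t ^ ((N : ℝ) / 2 - 1) * exp (-(1 / 2 * t)) * exp (-(r / 2)) := by
        refine integral_mono_of_nonneg ?_ (hdom.mul_const _) ?_ <;>
          filter_upwards [ae_restrict_mem measurableSet_Ioi] with t (ht : 0 < t)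
        · positivity
        rw [mul_assoc, ← exp_add]
        gcongr
        have : r / 2 - t / 2 ≤ r ^ 2 / (4 * t) := by
          rw [le_div_iff₀ (by positivity)]; nlinarith [sq_nonneg (r - t)]
        linarith
    _ = 2 ^ ((N : ℝ) / 2) * Gamma (N / 2) * exp (-(r / 2)) := by
        rw [integral_mul_const, integral_rpow_mul_exp_neg_mul_Ioi hs (by norm_num)]
        norm_num

section ModulusOfContinuity

variable {N : ℕ} {u : EuclideanSpace ℝ (Fin N) → ℝ} {x : EuclideanSpace ℝ (Fin N)} {M : ℝ}

lemma modulusOfContinuity_nonneg (r : ℝ) : 0 ≤ modulusOfContinuity u x r :=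
  Real.sSup_nonneg <| by rintro _ ⟨y, -, rfl⟩; exact abs_nonneg _

lemma abs_sub_le_two_mul_of_abs_le (hM : ∀ y, |u y| ≤ M) (y : EuclideanSpace ℝ (Fin N)) :
    |u x - u y| ≤ 2 * M := by
  linarith [abs_sub (u x) (u y), hM x, hM y]

lemma abs_sub_le_modulusOfContinuity (hM : ∀ y, |u y| ≤ M) {y : EuclideanSpace ℝ (Fin N)}
    {r : ℝ} (h : dist x y ≤ r) : |u x - u y| ≤ modulusOfContinuity u x r :=
  le_csSup ⟨2 * M, by rintro _ ⟨z, -, rfl⟩; exact abs_sub_le_two_mul_of_abs_le hM z⟩ ⟨y, h, rfl⟩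

lemma modulusOfContinuity_le (hM : ∀ y, |u y| ≤ M) (r : ℝ) :
    modulusOfContinuity u x r ≤ 2 * M :=
  Real.sSup_le (by rintro _ ⟨y, -, rfl⟩; exact abs_sub_le_two_mul_of_abs_le hM y)
    (by linarith [hM x, abs_nonneg (u x)])

lemma monotone_modulusOfContinuity (hM : ∀ y, |u y| ≤ M) :
    Monotone (modulusOfContinuity u x) := fun _ s hrs =>
  Real.sSup_le (by rintro _ ⟨y, hy, rfl⟩; exact abs_sub_le_modulusOfContinuity hM (hy.trans hrs))
    (modulusOfContinuity_nonneg s)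

lemma integrableOn_modulusOfContinuity_mul_exp_div (hM : ∀ y, |u y| ≤ M)
    (hdini : DiniContinuousAt u x) :
    IntegrableOn (fun r => modulusOfContinuity u x r * exp (-(r / 2)) / r) (Ioi 0) := by
  have hmeas : Measurable fun r => modulusOfContinuity u x r * exp (-(r / 2)) / r :=
    ((monotone_modulusOfContinuity hM).measurable.mul (by fun_prop)).div measurable_id
  rw [← Ioc_union_Ioi_eq_Ioi zero_le_one]
  refine IntegrableOn.union ?_ ?_
  · refine Integrable.mono' hdini hmeas.aestronglyMeasurable ?_
    filter_upwards [ae_restrict_mem measurableSet_Ioc] with r hr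
    have hΨ := modulusOfContinuity_nonneg (u := u) (x := x) r
    have hr0 := hr.1
    rw [norm_of_nonneg (by positivity)]
    gcongr
    exact mul_le_of_le_one_right hΨ (exp_le_one_iff.2 (by linarith))
  · refine Integrable.mono' ((exp_neg_integrableOn_Ioi 1 (b := 1 / 2) (by norm_num)).const_mul
      (2 * M)) hmeas.aestronglyMeasurable ?_
    filter_upwards [ae_restrict_mem measurableSet_Ioi] with r (hr : 1 < r)
    have hΨ := modulusOfContinuity_nonneg (u := u) (x := x) r
    have hM0 := (abs_nonneg _).trans (hM x)
    rw [norm_of_nonneg (by positivity), div_le_iff₀ (by positivity), neg_mul, one_div_mul_eq_div,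
      ← neg_div]
    calc modulusOfContinuity u x r * exp (-r / 2)
        ≤ 2 * M * exp (-r / 2) := by gcongr; exact modulusOfContinuity_le hM r
      _ ≤ 2 * M * exp (-r / 2) * r := le_mul_of_one_le_right (by positivity) hr.le

end ModulusOfContinuity

theorem integrable_logSchrodinger_integrand {N : ℕ} [NeZero N]
    {u : EuclideanSpace ℝ (Fin N) → ℝ} (hu : AEStronglyMeasurable u volume) {M : ℝ}
    (hM : ∀ y, |u y| ≤ M) {x : EuclideanSpace ℝ (Fin N)} (hdini : DiniContinuousAt u x) :
    Integrable (fun y => (u x - u y) * kappa N (dist x y) / dist x y ^ N) := by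
  have hprofile : Integrable fun y : EuclideanSpace ℝ (Fin N) =>
      modulusOfContinuity u x ‖y‖ * exp (-(‖y‖ / 2)) / ‖y‖ ^ N := by
    refine (integrable_fun_norm_addHaar volume
      (f := fun r => modulusOfContinuity u x r * exp (-(r / 2)) / r ^ N)).2 ?_
    rw [finrank_euclideanSpace_fin]
    refine (integrableOn_modulusOfContinuity_mul_exp_div hM hdini).congr_fun
      (fun r (hr : 0 < r) => ?_) measurableSet_Ioi
    rw [smul_eq_mul, ← pow_sub_one_mul (NeZero.ne N)]
    field_simp
  have hmeas : AEStronglyMeasurable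
      (fun y => (u x - u y) * kappa N (dist x y) / dist x y ^ N) volume := by
    have hdist : Measurable fun y : EuclideanSpace ℝ (Fin N) => dist x y :=
      measurable_const.dist measurable_id
    exact ((aestronglyMeasurable_const.sub hu).mul
      ((measurable_kappa N).comp hdist).aestronglyMeasurable).div₀
      (hdist.pow_const N).aestronglyMeasurable
  refine ((hprofile.comp_sub_left x).const_mul (2 ^ ((N : ℝ) / 2) * Gamma (N / 2))).mono'
    hmeas ?_
  filter_upwards [Measure.ae_ne volume x] with y hy
  have hr : 0 < dist x y := dist_pos.2 hy.symm
  rw [← dist_eq_norm, norm_div, norm_mul, norm_of_nonneg (kappa_nonneg N _),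
    norm_of_nonneg (pow_nonneg hr.le N), Real.norm_eq_abs]
  calc |u x - u y| * kappa N (dist x y) / dist x y ^ N
      ≤ modulusOfContinuity u x (dist x y) *
          (2 ^ ((N : ℝ) / 2) * Gamma (N / 2) * exp (-(dist x y / 2))) / dist x y ^ N := by
        have := modulusOfContinuity_nonneg (u := u) (x := x) (dist x y)
        have := abs_sub_le_modulusOfContinuity hM (le_refl (dist x y))
        have := kappa_le_mul_exp_neg_half (NeZero.ne N) (dist x y)
        gcongr
        exact kappa_nonneg N _
    _ = _ := by ring

theorem tendsto_setIntegral_dist_gt {X E : Type*} [MetricSpace X] [MeasurableSpace X]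
    [OpensMeasurableSpace X] [NormedAddCommGroup E] [NormedSpace ℝ E] {μ : Measure X}
    [NullSingletonClass μ] {g : X → E} (hg : Integrable g μ) (x : X) :
    Tendsto (fun ε => ∫ y in {y | ε < dist x y}, g y ∂μ) (𝓝[>] 0) (𝓝 (∫ y, g y ∂μ)) := by
  have hmeas (ε : ℝ) : MeasurableSet {y | ε < dist x y} :=
    (isOpen_lt continuous_const (continuous_const.dist continuous_id)).measurableSet
  simp_rw [← integral_indicator (hmeas _)]
  refine tendsto_integral_filter_of_dominated_convergence (fun y => ‖g y‖)
    (.of_forall fun ε => hg.1.indicator (hmeas ε))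
    (.of_forall fun ε => .of_forall fun y => norm_indicator_le_norm_self g y) hg.norm ?_
  filter_upwards [Measure.ae_ne μ x] with y hy
  refine tendsto_const_nhds.congr' ?_
  filter_upwards [Ioo_mem_nhdsGT (dist_pos.2 hy.symm)] with ε hε
  exact (indicator_of_mem (s := {y | ε < dist x y}) hε.2 g).symm

/-- well-definedness of the logarithmic Schrödinger operator at a
point of Dini continuity. -/
theorem logSchrodinger_well_defined (N : ℕ) [NeZero N]
    (u : EuclideanSpace ℝ (Fin N) → ℝ)
    (hL0 : MemL0 u) (hbdd : ∃ M : ℝ, ∀ x, |u x| ≤ M)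
    (x : EuclideanSpace ℝ (Fin N)) (hdini : DiniContinuousAt u x) :
    (∀ ε > (0 : ℝ), MeasureTheory.IntegrableOn
        (fun y => (u x - u y) * kappa N (dist x y) / dist x y ^ N)
        {y | ε < dist x y}) ∧
    ∃ L : ℝ, Filter.Tendsto
      (fun ε : ℝ => ∫ y in {y : EuclideanSpace ℝ (Fin N) | ε < dist x y},
        (u x - u y) * kappa N (dist x y) / dist x y ^ N)
      (nhdsWithin 0 (Set.Ioi 0)) (nhds L) := by
  obtain ⟨M, hM⟩ := hbdd
  have hint := integrable_logSchrodinger_integrand hL0.1.aestronglyMeasurable hM hdini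
  exact ⟨fun _ _ => hint.integrableOn, _, tendsto_setIntegral_dist_gt hint x⟩
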